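/- arXiv:2001.04935 — 2 statements merged into one kernel-verified Lean document; each statement's English description precedes it below -/
import Mathlib

section
/- Let S be a finite set and υ : 𝒫(S) → ℝ a nonnegative, monotone, submodular set function with υ(∅) = 0. Let k ∈ ℕ and let X_greedy be the set produced by k steps of the greedy algorithm that starts from ∅ and at each step adds an element e maximizing υ(X ∪ {e}). Then υ(X_greedy) ≥ (1 - 1/e) · max{υ(Y) : Y ⊆ S, |Y| ≤ k}. -/
/-!
Let `Y` have at most `k` elements and let `dᵢ = υ Y - υ (Xᵢ)` be the greedy deficit. By
monotonicity and submodularity, `υ Y - υ (Xᵢ)` is at most the sum of the marginal gains of the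
elements of `Y` over `Xᵢ`, each of which is at most the greedy gain `υ (Xᵢ₊₁) - υ (Xᵢ)`; hence
`dᵢ ≤ k (dᵢ - dᵢ₊₁)`, i.e. `dᵢ₊₁ ≤ (1 - 1/k) dᵢ`. After `k` steps `d_k ≤ (1 - 1/k)^k υ Y ≤ υ Y / e`.
-/

open Finset

section SetFunction

variable {α : Type*} [DecidableEq α] {f : Finset α → ℝ}

theorem sub_le_sum_insert_sub_of_submodular
    (hsub : ∀ X Y : Finset α, X ⊆ Y → ∀ x ∉ Y, f (insert x Y) - f Y ≤ f (insert x X) - f X)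
    {B T : Finset α} (hTB : Disjoint T B) :
    f (B ∪ T) - f B ≤ ∑ e ∈ T, (f (insert e B) - f B) := by
  induction T using Finset.induction_on with
  | empty => simp
  | @insert x T hxT ih =>
    rw [disjoint_insert_left] at hTB
    have hx : x ∉ B ∪ T := by simp [hTB.1, hxT]
    have hgain := hsub B (B ∪ T) subset_union_left x hx
    rw [union_insert, sum_insert hxT]
    linarith [ih hTB.2]

theorem sub_le_card_mul_of_insert_sub_le
    (hmono : ∀ X Y : Finset α, X ⊆ Y → f X ≤ f Y)
    (hsub : ∀ X Y : Finset α, X ⊆ Y → ∀ x ∉ Y, f (insert x Y) - f Y ≤ f (insert x X) - f X)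
    {B Y : Finset α} {g : ℝ} (hg0 : 0 ≤ g) (hg : ∀ e, f (insert e B) - f B ≤ g) :
    f Y - f B ≤ Y.card * g := by
  have hY : f Y ≤ f (B ∪ (Y \ B)) :=
    hmono _ _ (by rw [union_sdiff_self_eq_union]; exact subset_union_right)
  have hcard : ((Y \ B).card : ℝ) ≤ Y.card := by
    exact_mod_cast card_le_card sdiff_subset
  calc f Y - f B ≤ f (B ∪ (Y \ B)) - f B := by linarith
    _ ≤ ∑ e ∈ Y \ B, (f (insert e B) - f B) :=
      sub_le_sum_insert_sub_of_submodular hsub sdiff_disjoint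
    _ ≤ (Y \ B).card * g := by simpa using sum_le_card_nsmul _ _ g fun e _ => hg e
    _ ≤ Y.card * g := mul_le_mul_of_nonneg_right hcard hg0

end SetFunction

theorem le_exp_neg_one_mul_of_le_mul_sub {d : ℕ → ℝ} {k : ℕ} (hk : 0 < k)
    (hd : ∀ i, d i ≤ k * (d i - d (i + 1))) (h0 : 0 ≤ d 0) :
    d k ≤ Real.exp (-1) * d 0 := by
  have hkpos : (0 : ℝ) < k := by exact_mod_cast hk
  have hc0 : 0 ≤ 1 - 1 / (k : ℝ) := sub_nonneg.2 <| (div_le_one hkpos).2 (by exact_mod_cast hk)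
  have hstep : ∀ i, d (i + 1) ≤ (1 - 1 / (k : ℝ)) * d i := by
    intro i
    rw [show (1 - 1 / (k : ℝ)) * d i = d i - d i / k by ring, le_sub_comm, div_le_iff₀ hkpos]
    linarith [hd i]
  have hiter : ∀ n, d n ≤ (1 - 1 / (k : ℝ)) ^ n * d 0 := by
    intro n
    induction n with
    | zero => simp
    | succ n ih =>
      calc d (n + 1) ≤ (1 - 1 / (k : ℝ)) * d n := hstep n
        _ ≤ (1 - 1 / (k : ℝ)) * ((1 - 1 / (k : ℝ)) ^ n * d 0) :=
          mul_le_mul_of_nonneg_left ih hc0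
        _ = (1 - 1 / (k : ℝ)) ^ (n + 1) * d 0 := by ring
  calc d k ≤ (1 - 1 / (k : ℝ)) ^ k * d 0 := hiter k
    _ ≤ Real.exp (-1) * d 0 :=
      mul_le_mul_of_nonneg_right (Real.one_sub_div_pow_le_exp_neg (by exact_mod_cast hk)) h0

theorem stmt_4_general {S : Type*} [DecidableEq S]
    (υ : Finset S → ℝ)
    (hmono : ∀ X Y : Finset S, X ⊆ Y → υ X ≤ υ Y)
    (hsub : ∀ X Y : Finset S, X ⊆ Y → ∀ x ∉ Y,
      υ (insert x Y) - υ Y ≤ υ (insert x X) - υ X)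
    (hempty : υ ∅ = 0)
    (k : ℕ)
    (X : ℕ → Finset S)
    (hX0 : X 0 = ∅)
    (hgreedy : ∀ j, ∃ e : S, X (j + 1) = insert e (X j) ∧
      ∀ e' : S, υ (insert e' (X j)) ≤ υ (insert e (X j))) :
    ∀ Y : Finset S, Y.card ≤ k → (1 - 1 / Real.exp 1) * υ Y ≤ υ (X k) := by
  intro Y hY
  rcases k.eq_zero_or_pos with rfl | hk
  · simp [card_eq_zero.mp (Nat.le_zero.mp hY), hX0, hempty]
  have hdeficit : ∀ i, υ Y - υ (X i) ≤ k * ((υ Y - υ (X i)) - (υ Y - υ (X (i + 1)))) := by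
    intro i
    obtain ⟨e, hXe, hbest⟩ := hgreedy i
    have hgain : 0 ≤ υ (X (i + 1)) - υ (X i) :=
      sub_nonneg.2 (hmono _ _ (hXe ▸ subset_insert e (X i)))
    have hgap := sub_le_card_mul_of_insert_sub_le (B := X i) (Y := Y) hmono hsub hgain
      fun e' => by rw [hXe]; linarith [hbest e']
    have hcard : (Y.card : ℝ) ≤ k := by exact_mod_cast hY
    calc υ Y - υ (X i) ≤ Y.card * (υ (X (i + 1)) - υ (X i)) := hgap
      _ ≤ k * (υ (X (i + 1)) - υ (X i)) := mul_le_mul_of_nonneg_right hcard hgain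
      _ = k * ((υ Y - υ (X i)) - (υ Y - υ (X (i + 1)))) := by ring
  have hY0 : 0 ≤ υ Y := hempty ▸ hmono ∅ Y (empty_subset Y)
  have hdecay := le_exp_neg_one_mul_of_le_mul_sub hk hdeficit (by simpa [hX0, hempty] using hY0)
  rw [hX0, hempty, sub_zero] at hdecay
  rw [one_div, ← Real.exp_neg]
  linarith

/-- Nemhauser–Wolsey: greedy maximization of a nonnegative monotone submodular
    set function with a cardinality budget k achieves a (1 - 1/e) approximation. -/
theorem stmt_4 {S : Type*} [Fintype S] [DecidableEq S]
    (υ : Finset S → ℝ)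
    (hnonneg : ∀ X, 0 ≤ υ X)
    (hmono : ∀ X Y : Finset S, X ⊆ Y → υ X ≤ υ Y)
    (hsub : ∀ X Y : Finset S, X ⊆ Y → ∀ x ∉ Y,
      υ (insert x Y) - υ Y ≤ υ (insert x X) - υ X)
    (hempty : υ ∅ = 0)
    (k : ℕ)
    (X : ℕ → Finset S)
    (hX0 : X 0 = ∅)
    (hgreedy : ∀ j, ∃ e : S, X (j + 1) = insert e (X j) ∧
      ∀ e' : S, υ (insert e' (X j)) ≤ υ (insert e (X j))) :
    ∀ Y : Finset S, Y.card ≤ k → (1 - 1 / Real.exp 1) * υ Y ≤ υ (X k) :=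
  stmt_4_general υ hmono hsub hempty k X hX0 hgreedy
end

section
/- Let S be a finite set, υ : 𝒫(S) → ℝ nonnegative, monotone, submodular, and let OPT_k = max{υ(Y) : |Y| ≤ k}. If X_j denotes the greedy set after j steps, then for every j ≥ 0: OPT_k - υ(X_{j+1}) ≤ (1 - 1/k)·(OPT_k - υ(X_j)). Consequently OPT_k - υ(X_k) ≤ (1 - 1/k)^k · OPT_k. -/
lemma sub_marginal {S : Type*} [DecidableEq S]
    (υ : Finset S → ℝ)
    (hsub : ∀ X Y : Finset S, X ⊆ Y → ∀ x ∉ Y,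
      υ (insert x Y) - υ Y ≤ υ (insert x X) - υ X)
    (A : Finset S) : ∀ T : Finset S,
    υ (A ∪ T) - υ A ≤ ∑ e ∈ T, (υ (insert e A) - υ A) := by
  intro T
  induction T using Finset.induction with
  | empty => simp
  | @insert a T ha ih =>
    rw [Finset.sum_insert ha, Finset.union_insert]
    by_cases haA : a ∈ A ∪ T
    · rw [Finset.insert_eq_self.mpr haA]
      have : a ∈ A ∨ a ∈ T := Finset.mem_union.mp haA
      have haA' : a ∈ A := by tauto
      rw [Finset.insert_eq_self.mpr haA']
      linarith
    · have h := hsub A (A ∪ T) Finset.subset_union_left a haA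
      linarith

/-- Per-step contraction lemma for greedy submodular maximization, and the
    resulting (1 - 1/k)^k bound. -/
theorem stmt_5 {S : Type*} [Fintype S] [DecidableEq S]
    (υ : Finset S → ℝ)
    (hnonneg : ∀ X, 0 ≤ υ X)
    (hmono : ∀ X Y : Finset S, X ⊆ Y → υ X ≤ υ Y)
    (hsub : ∀ X Y : Finset S, X ⊆ Y → ∀ x ∉ Y,
      υ (insert x Y) - υ Y ≤ υ (insert x X) - υ X)
    (k : ℕ) (hk : 1 ≤ k)
    (OPT : ℝ)
    (hOPTub : ∀ Y : Finset S, Y.card ≤ k → υ Y ≤ OPT)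
    (hOPTmem : ∃ Y : Finset S, Y.card ≤ k ∧ υ Y = OPT)
    (X : ℕ → Finset S)
    (hX0 : X 0 = ∅)
    (hgreedy : ∀ j, ∃ e : S, X (j + 1) = insert e (X j) ∧
      ∀ e' : S, υ (insert e' (X j)) ≤ υ (insert e (X j))) :
    (∀ j : ℕ, OPT - υ (X (j + 1)) ≤ (1 - 1 / (k : ℝ)) * (OPT - υ (X j))) ∧
      OPT - υ (X k) ≤ (1 - 1 / (k : ℝ)) ^ k * OPT := by
  have hkR : (1 : ℝ) ≤ (k : ℝ) := by exact_mod_cast hk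
  have hkpos : (0 : ℝ) < (k : ℝ) := by linarith
  obtain ⟨Y, hYcard, hYopt⟩ := hOPTmem
  have step : ∀ j : ℕ, OPT - υ (X (j + 1)) ≤ (1 - 1 / (k : ℝ)) * (OPT - υ (X j)) := by
    intro j
    obtain ⟨e, hXe, hmax⟩ := hgreedy j
    have hgain : υ (X j) ≤ υ (X (j + 1)) := by
      rw [hXe]; exact hmono _ _ (Finset.subset_insert _ _)
    have hsum := sub_marginal υ hsub (X j) Y
    have hbound : ∑ e' ∈ Y, (υ (insert e' (X j)) - υ (X j)) ≤
        (Y.card : ℝ) * (υ (X (j + 1)) - υ (X j)) := by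
      rw [← nsmul_eq_mul, ← Finset.sum_const]
      apply Finset.sum_le_sum
      intro i _
      rw [hXe]
      linarith [hmax i]
    have hYk : (Y.card : ℝ) ≤ (k : ℝ) := by exact_mod_cast hYcard
    have hYub : OPT ≤ υ (X j ∪ Y) := by
      rw [← hYopt]; exact hmono _ _ Finset.subset_union_right
    have hcard : (Y.card : ℝ) * (υ (X (j + 1)) - υ (X j)) ≤
        (k : ℝ) * (υ (X (j + 1)) - υ (X j)) := by
      apply mul_le_mul_of_nonneg_right hYk; linarith
    have key : OPT - υ (X j) ≤ (k : ℝ) * (υ (X (j + 1)) - υ (X j)) := by linarith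
    have h1 : (1 - 1 / (k : ℝ)) * (OPT - υ (X j)) =
        OPT - υ (X j) - (OPT - υ (X j)) / k := by ring
    have h2 : (OPT - υ (X j)) / (k : ℝ) ≤ υ (X (j + 1)) - υ (X j) := by
      exact (div_le_iff₀ hkpos).mpr (by linarith [key])
    linarith
  refine ⟨step, ?_⟩
  have hfac : (0 : ℝ) ≤ 1 - 1 / (k : ℝ) := by
    rw [sub_nonneg, div_le_one hkpos]; linarith
  have main : ∀ j : ℕ, OPT - υ (X j) ≤ (1 - 1 / (k : ℝ)) ^ j * OPT := by
    intro j
    induction j with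
    | zero => simp; linarith [hnonneg (X 0)]
    | succ n ih =>
      calc OPT - υ (X (n + 1)) ≤ (1 - 1 / (k : ℝ)) * (OPT - υ (X n)) := step n
        _ ≤ (1 - 1 / (k : ℝ)) * ((1 - 1 / (k : ℝ)) ^ n * OPT) :=
            mul_le_mul_of_nonneg_left ih hfac
        _ = (1 - 1 / (k : ℝ)) ^ (n + 1) * OPT := by ring
  exact main k
end
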